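/- arXiv:1602.03575 — 2 statements merged into one kernel-verified Lean document; each statement's English description precedes it below -/
import Mathlib

section
/- Let F ≤ S_d and let l be a legal labelling of the d-regular tree T_d (d ≥ 3). Then U^{(l)}(F) acts transitively on the geometric edges of T_d if and only if F acts transitively on {1,…,d}. -/
/-!
STATEMENT 10.  U^{(l)}(F) acts transitively on the geometric edges of T_d if and only if
F acts transitively on {1,…,d}.
-/

def IsTreeAut {V : Type*} (T : SimpleGraph V) (g : Equiv.Perm V) : Prop :=
  ∀ u v : V, T.Adj (g u) (g v) ↔ T.Adj u v

structure LegalLabelling {V : Type*} (T : SimpleGraph V) (d : ℕ) where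
  label : V → V → Fin d
  symm : ∀ u v : V, T.Adj u v → label u v = label v u
  inj : ∀ ⦃x u w : V⦄, T.Adj x u → T.Adj x w → label x u = label x w → u = w
  surj : ∀ (x : V) (i : Fin d), ∃ w : V, T.Adj x w ∧ label x w = i

/-- Membership in the Burger–Mozes universal group U^{(l)}(F). -/
def InU {V : Type*} {d : ℕ} (T : SimpleGraph V) (l : LegalLabelling T d)
    (F : Subgroup (Equiv.Perm (Fin d))) (g : Equiv.Perm V) : Prop :=
  IsTreeAut T g ∧
    ∀ x : V, ∃ a ∈ F, ∀ w : V, T.Adj x w → l.label (g x) (g w) = a (l.label x w)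

/-!
If `F` is transitive, an element of `U^{(l)}(F)` mapping the edge `(u, v)` to `(u', v')` is built
by transport along the paths issuing from `u`: start at `u'` with a local action `a₀ ∈ F` sending
the label of `uv` to that of `u'v'`, and on crossing an edge with label `i` under the local
action `a`, continue with an element of `F` that agrees with `a` at `i`. Since every local action
is a bijection, the resulting map is a graph homomorphism that is bijective on each star, and such
a homomorphism from a connected graph to a tree is an isomorphism: stars lift walks, and images of
paths are non-backtracking, hence paths.

Conversely, the local action at `x` of an automorphism moving the edge `(x, nbr x i)` onto
`(x, nbr x j)` (in either orientation) sends `i` to `j`.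
-/

namespace SimpleGraph

variable {V W : Type*} {G : SimpleGraph V} {H : SimpleGraph W}

theorem IsAcyclic.eq_concat_or_eq_concat (hG : G.IsAcyclic) {u x w : V} {p : G.Walk u x}
    {q : G.Walk u w} (hp : p.IsPath) (hq : q.IsPath) (h : G.Adj x w) :
    q = p.concat h ∨ p = q.concat h.symm := by
  by_cases hx : x ∈ q.support
  · exact .inl (hG.path_concat hp hq h hx)
  · exact .inr (hG.path_concat hq hp h.symm
      (hG.mem_support_of_ne_mem_support_of_adj_of_isPath hp hq h hx))

namespace Hom

variable (f : G →g H)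

theorem isPath_map_of_injOn_neighborSet (hH : H.IsAcyclic)
    (hf : ∀ x, Set.InjOn f (G.neighborSet x)) {x y : V} {p : G.Walk x y} (hp : p.IsPath) :
    (p.map f).IsPath := by
  induction p with
  | nil => simp
  | @cons x y z h q ih =>
    rw [Walk.cons_isPath_iff] at hp
    rw [Walk.map_cons, Walk.cons_isPath_iff]
    refine ⟨ih hp.1, fun hx => hp.2 ?_⟩
    have hsnd := hH.eq_snd_of_adj_start (ih hp.1) (f.map_adj h).symm hx
    cases q with
    | nil => exact absurd hsnd (f.map_adj h).ne
    | cons h' q =>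
      rw [Walk.map_cons, Walk.snd_cons] at hsnd
      rw [hf y h.symm h' hsnd]
      simp

theorem injective_of_injOn_neighborSet (hG : G.Preconnected) (hH : H.IsAcyclic)
    (hf : ∀ x, Set.InjOn f (G.neighborSet x)) : Function.Injective f := by
  intro x y hxy
  obtain ⟨p, hp⟩ := (hG x y).exists_isPath
  have hq := (Walk.isPath_copy _ rfl hxy.symm).mpr (f.isPath_map_of_injOn_neighborSet hH hf hp)
  rw [Walk.isPath_iff_nil, Walk.nil_copy, Walk.nil_map_iff] at hq
  exact hq.eq

theorem surjective_of_surjOn_neighborSet [Nonempty V] (hH : H.Preconnected)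
    (hf : ∀ x, Set.SurjOn f (G.neighborSet x) (H.neighborSet (f x))) :
    Function.Surjective f := by
  have lift : ∀ {z y : W} (q : H.Walk z y), z ∈ Set.range f → y ∈ Set.range f := by
    intro z y q
    induction q with
    | nil => exact id
    | cons h q ih =>
      rintro ⟨x, rfl⟩
      obtain ⟨w, -, hw⟩ := hf x h
      exact ih ⟨w, hw⟩
  obtain ⟨x₀⟩ := ‹Nonempty V›
  exact fun y => lift (hH (f x₀) y).some ⟨x₀, rfl⟩

theorem exists_iso_of_injOn_of_surjOn_neighborSet (hG : G.Connected) (hH : H.IsTree)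
    (hinj : ∀ x, Set.InjOn f (G.neighborSet x))
    (hsurj : ∀ x, Set.SurjOn f (G.neighborSet x) (H.neighborSet (f x))) :
    ∃ e : G ≃g H, ⇑e = f := by
  have := hG.nonempty
  have hf : Function.Injective f :=
    f.injective_of_injOn_neighborSet hG.preconnected hH.isAcyclic hinj
  have hf' : Function.Surjective f :=
    f.surjective_of_surjOn_neighborSet hH.connected.preconnected hsurj
  refine ⟨⟨Equiv.ofBijective f ⟨hf, hf'⟩, fun {x y} => ⟨fun h => ?_, f.map_adj⟩⟩, rfl⟩
  obtain ⟨w, hw, hfw⟩ := hsurj x h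
  exact hf hfw ▸ hw

end Hom

end SimpleGraph

namespace LegalLabelling

open SimpleGraph

variable {V : Type*} {T : SimpleGraph V} {d : ℕ} (l : LegalLabelling T d)

noncomputable def nbr (x : V) (i : Fin d) : V :=
  (l.surj x i).choose

theorem adj_nbr (x : V) (i : Fin d) : T.Adj x (l.nbr x i) :=
  (l.surj x i).choose_spec.1

@[simp]
theorem label_nbr (x : V) (i : Fin d) : l.label x (l.nbr x i) = i :=
  (l.surj x i).choose_spec.2

theorem nbr_label {x w : V} (h : T.Adj x w) : l.nbr x (l.label x w) = w :=
  l.inj (l.adj_nbr x _) h (l.label_nbr x _)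

theorem nbr_nbr (x : V) (i : Fin d) : l.nbr (l.nbr x i) i = x := by
  have h := (l.adj_nbr x i).symm
  have hi : l.label (l.nbr x i) x = i := (l.symm _ _ h).trans (l.label_nbr x i)
  simpa only [hi] using l.nbr_label h

noncomputable def transport (σ : Fin d → Fin d → Equiv.Perm (Fin d)) (s₀ : V × Equiv.Perm (Fin d))
    {y x : V} (p : T.Walk y x) : V × Equiv.Perm (Fin d) :=
  (p.darts.map fun e => l.label e.fst e.snd).foldl
    (fun s i => (l.nbr s.1 (s.2 i), σ i (s.2 i))) s₀

variable (σ : Fin d → Fin d → Equiv.Perm (Fin d)) (s₀ : V × Equiv.Perm (Fin d))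

@[simp]
theorem transport_nil (y : V) : l.transport σ s₀ (Walk.nil : T.Walk y y) = s₀ := rfl

theorem transport_concat {y x w : V} (p : T.Walk y x) (h : T.Adj x w) :
    l.transport σ s₀ (p.concat h) =
      (l.nbr (l.transport σ s₀ p).1 ((l.transport σ s₀ p).2 (l.label x w)),
        σ (l.label x w) ((l.transport σ s₀ p).2 (l.label x w))) := by
  simp [transport, Walk.darts_concat, List.concat_eq_append]

theorem transport_snd_mem {F : Subgroup (Equiv.Perm (Fin d))} (hσ : ∀ i j, σ i j ∈ F)
    (h₀ : s₀.2 ∈ F) {y x : V} (p : T.Walk y x) : (l.transport σ s₀ p).2 ∈ F := by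
  classical
  induction p using Walk.concatRec with
  | Hnil => exact h₀
  | Hconcat p h _ => rw [transport_concat]; exact hσ _ _

def IsLocalAction (g : V → V) (A : V → Equiv.Perm (Fin d)) : Prop :=
  ∀ x w, T.Adj x w → g w = l.nbr (g x) (A x (l.label x w))

theorem exists_isLocalAction (hT : T.IsTree) {F : Subgroup (Equiv.Perm (Fin d))}
    (hF : ∀ i j, ∃ a ∈ F, a i = j) (u u' : V) {a₀ : Equiv.Perm (Fin d)} (ha₀ : a₀ ∈ F) :
    ∃ (g : V → V) (A : V → Equiv.Perm (Fin d)), g u = u' ∧ A u = a₀ ∧ (∀ x, A x ∈ F) ∧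
      l.IsLocalAction g A := by
  choose σ hσF hσ using hF
  choose path hpath using fun x => (hT.existsUnique_path u x).exists
  let S (x : V) := l.transport σ (u', a₀) (path x)
  have hSu : S u = (u', a₀) := by
    simp only [S, Walk.eq_nil_iff_nil.mpr (Walk.isPath_iff_nil.mp (hpath u)), transport_nil]
  refine ⟨fun x => (S x).1, fun x => (S x).2, ?_, ?_, fun x => l.transport_snd_mem σ _ hσF ha₀ _,
    fun x w h => ?_⟩
  · exact congrArg Prod.fst hSu
  · exact congrArg Prod.snd hSu
  · rcases hT.isAcyclic.eq_concat_or_eq_concat (hpath x) (hpath w) h with hw | hx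
    · simp only [S, hw, transport_concat]
    · simp only [S, hx, transport_concat, hσ, l.symm x w h, nbr_nbr]

variable {l} in
theorem IsLocalAction.exists_iso (hT : T.IsTree) {g : V → V} {A : V → Equiv.Perm (Fin d)}
    (hg : l.IsLocalAction g A) : ∃ e : T ≃g T, ⇑e = g := by
  let f : T →g T := ⟨g, fun {x w} h => hg x w h ▸ l.adj_nbr _ _⟩
  refine f.exists_iso_of_injOn_of_surjOn_neighborSet hT.connected hT ?_ ?_
  · intro x w hw w' hw' he
    change g w = g w' at he
    have := congrArg (l.label (g x)) he
    rw [hg x w hw, hg x w' hw', label_nbr, label_nbr] at this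
    exact l.inj hw hw' ((A x).injective this)
  · intro x y hy
    refine ⟨l.nbr x ((A x).symm (l.label (g x) y)), l.adj_nbr _ _, ?_⟩
    change g _ = y
    rw [hg x _ (l.adj_nbr _ _), label_nbr, Equiv.apply_symm_apply]
    exact l.nbr_label hy

end LegalLabelling

theorem universal_group_edge_transitive_iff_general {V : Type*} (T : SimpleGraph V)
    (hT : T.IsTree) (d : ℕ) (l : LegalLabelling T d)
    (F : Subgroup (Equiv.Perm (Fin d))) :
    (∀ u v u' v' : V, T.Adj u v → T.Adj u' v' →
      ∃ g : Equiv.Perm V, InU T l F g ∧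
        ((g u = u' ∧ g v = v') ∨ (g u = v' ∧ g v = u'))) ↔
    (∀ i j : Fin d, ∃ a ∈ F, a i = j) := by
  constructor
  · intro hE i j
    obtain ⟨x⟩ := hT.connected.nonempty
    obtain ⟨g, ⟨-, hloc⟩, hgx⟩ := hE x (l.nbr x i) x (l.nbr x j) (l.adj_nbr x i) (l.adj_nbr x j)
    obtain ⟨a, haF, ha⟩ := hloc x
    refine ⟨a, haF, ?_⟩
    have hai := ha _ (l.adj_nbr x i)
    rcases hgx with ⟨hx, hi⟩ | ⟨hx, hi⟩ <;> rw [hx, hi] at hai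
    · simpa only [l.label_nbr, eq_comm] using hai
    · simpa only [← l.symm _ _ (l.adj_nbr x j), l.label_nbr, eq_comm] using hai
  · intro hF u v u' v' huv hu'v'
    obtain ⟨a₀, ha₀F, ha₀⟩ := hF (l.label u v) (l.label u' v')
    obtain ⟨g, A, hgu, hAu, hAF, hg⟩ := l.exists_isLocalAction hT hF u u' ha₀F
    obtain ⟨e, rfl⟩ := hg.exists_iso hT
    refine ⟨e.toEquiv, ⟨fun x w => e.map_adj_iff, fun x => ⟨A x, hAF x, fun w hw => ?_⟩⟩,
      .inl ⟨hgu, ?_⟩⟩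
    · exact (hg x w hw).symm ▸ l.label_nbr _ _
    · change e v = v'
      rw [hg u v huv, hgu, hAu, ha₀, l.nbr_label hu'v']

/-- U^{(l)}(F) is transitive on geometric edges iff F is transitive on {1,…,d}. -/
theorem universal_group_edge_transitive_iff {V : Type*} (T : SimpleGraph V)
    (hT : T.IsTree) (d : ℕ) (hd : 3 ≤ d) (l : LegalLabelling T d)
    (F : Subgroup (Equiv.Perm (Fin d))) :
    (∀ u v u' v' : V, T.Adj u v → T.Adj u' v' →
      ∃ g : Equiv.Perm V, InU T l F g ∧
        ((g u = u' ∧ g v = v') ∨ (g u = v' ∧ g v = u'))) ↔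
    (∀ i j : Fin d, ∃ a ∈ F, a i = j) :=
  universal_group_edge_transitive_iff_general T hT d l F
end

section
/- Let T be a simplicial tree, G ≤ Aut(T) and k ∈ ℕ. Then the k-closure G^(k) satisfies Property P_k. -/
def IsConvex {V : Type*} (T : SimpleGraph V) (X : Set V) : Prop :=
  ∀ u ∈ X, ∀ v ∈ X, ∀ p : T.Walk u v, p.IsPath → ∀ w ∈ p.support, w ∈ X

/-- A path in the tree: a nonempty convex set of vertices in which every vertex has at
most two neighbours.  This covers finite, one-sided infinite and bi-infinite paths. -/
def IsPathSet {V : Type*} (T : SimpleGraph V) (C : Set V) : Prop :=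
  C.Nonempty ∧ IsConvex T C ∧
    ∀ x ∈ C, ∀ w₁ ∈ C, ∀ w₂ ∈ C, ∀ w₃ ∈ C,
      T.Adj x w₁ → T.Adj x w₂ → T.Adj x w₃ → (w₁ = w₂ ∨ w₁ = w₃ ∨ w₂ = w₃)

/-- The m-neighbourhood Cᵐ of a set of vertices: all vertices at distance at most m. -/
def nbhd {V : Type*} (T : SimpleGraph V) (C : Set V) (m : ℕ) : Set V :=
  {v | ∃ c ∈ C, T.dist v c ≤ m}

/-- T_x = π_C⁻¹(x): the vertices whose nearest point of C is x. -/
def projSet {V : Type*} (T : SimpleGraph V) (C : Set V) (x : V) : Set V :=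
  {v | ∀ c ∈ C, T.dist v x ≤ T.dist v c}

/-- Property P_k for a set S of automorphisms: for every path C, the natural injective
homomorphism from the pointwise stabilizer of C^{k-1} in S to the product over x ∈ C of
the permutation groups induced on the subtrees T_x is an isomorphism (injectivity and
surjectivity clauses). -/
def PropertyPk {V : Type*} (T : SimpleGraph V) (S : Set (Equiv.Perm V)) (k : ℕ) : Prop :=
  ∀ C : Set V, IsPathSet T C →
    ((∀ g ∈ S, (∀ v ∈ nbhd T C (k-1), g v = v) →
        (∀ x ∈ C, ∀ v ∈ projSet T C x, g v = v) → g = 1) ∧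
     (∀ h : V → Equiv.Perm V,
        (∀ x ∈ C, h x ∈ S ∧ ∀ v ∈ nbhd T C (k-1), (h x) v = v) →
        ∃ g ∈ S, (∀ v ∈ nbhd T C (k-1), g v = v) ∧
          ∀ x ∈ C, ∀ v ∈ projSet T C x, g v = (h x) v))

/-- The k-closure of a set S of automorphisms of T: the automorphisms which agree on
every ball of radius k with some element of S. -/
def kClosure {V : Type*} (T : SimpleGraph V) (S : Set (Equiv.Perm V)) (k : ℕ) :
    Set (Equiv.Perm V) :=
  {h : Equiv.Perm V | IsTreeAut T h ∧
    ∀ x : V, ∃ g ∈ S, ∀ v : V, T.dist x v ≤ k → h v = g v}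

/-- The topology of pointwise convergence on vertices (vertices being discrete). -/
def permTop (V : Type*) : TopologicalSpace (Equiv.Perm V) :=
  TopologicalSpace.induced (fun g : Equiv.Perm V => (g : V → V))
    (@Pi.topologicalSpace V (fun _ => V) (fun _ => ⊥))
namespace SimpleGraph

variable {V W : Type*} {G : SimpleGraph V} {G' : SimpleGraph W} {u v w : V}

lemma Hom.dist_le (f : G →g G') (h : G.Reachable u v) : G'.dist (f u) (f v) ≤ G.dist u v := by
  obtain ⟨p, hp⟩ := h.exists_walk_length_eq_dist
  simpa [hp] using SimpleGraph.dist_le (p.map f)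

lemma Iso.dist_eq (f : G ≃g G') (h : G.Reachable u v) : G'.dist (f u) (f v) = G.dist u v :=
  le_antisymm (f.toHom.dist_le h) (by simpa using f.symm.toHom.dist_le (h.map f.toHom))

lemma Walk.IsPath.append {p : G.Walk u v} {q : G.Walk v w} (hp : p.IsPath) (hq : q.IsPath)
    (hpq : ∀ z ∈ p.support, z ∈ q.support → z = v) : (p.append q).IsPath := by
  rw [Walk.isPath_def, Walk.support_append, List.nodup_append]
  refine ⟨hp.support_nodup, hq.support_nodup.tail, fun z hzp z' hzq hzz' => ?_⟩
  subst hzz'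
  obtain rfl := hpq z hzp (List.mem_of_mem_tail hzq)
  have := hq.support_nodup
  rw [← q.cons_tail_support] at this
  exact (List.nodup_cons.mp this).1 hzq

namespace IsTree

variable (hG : G.IsTree)
include hG

lemma length_eq_dist {p : G.Walk u v} (hp : p.IsPath) : p.length = G.dist u v := by
  obtain ⟨q, hq, hlen⟩ := hG.connected.exists_path_of_dist u v
  rw [(hG.existsUnique_path u v).unique hp hq, hlen]

lemma dist_add_dist_of_mem_support {p : G.Walk u v} (hp : p.IsPath) {z : V}
    (hz : z ∈ p.support) : G.dist u z + G.dist z v = G.dist u v := by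
  classical
  rw [← hG.length_eq_dist hp, ← hG.length_eq_dist (hp.takeUntil hz),
    ← hG.length_eq_dist (hp.dropUntil hz), ← Walk.length_append, p.take_spec hz]

lemma dist_add_dist_of_isPath_append {p : G.Walk u v} {q : G.Walk v w}
    (hpq : (p.append q).IsPath) : G.dist u v + G.dist v w = G.dist u w := by
  rw [← hG.length_eq_dist hpq, Walk.length_append, hG.length_eq_dist hpq.of_append_left,
    hG.length_eq_dist hpq.of_append_right]

lemma dist_eq_add_add_of_ne {x y : V} (hxy : x ≠ y)
    (hu : G.dist u y = G.dist u x + G.dist x y) (hw : G.dist w x = G.dist w y + G.dist y x) :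
    G.dist u w = G.dist u x + G.dist x y + G.dist y w := by
  have hconn := hG.connected
  obtain ⟨p, hp, hpl⟩ := hconn.exists_path_of_dist u x
  obtain ⟨q, hq, hql⟩ := hconn.exists_path_of_dist x y
  obtain ⟨r, hr, -⟩ := hconn.exists_path_of_dist y w
  have hpq : (p.append q).IsPath :=
    (p.append q).isPath_of_length_eq_dist (by rw [Walk.length_append, hpl, hql, hu])
  rw [← hu]
  refine (hG.dist_add_dist_of_isPath_append (hpq.append hr fun z hz hzr => ?_)).symm
  have hxy' : G.dist x y ≠ 0 := fun h => hxy (hconn.dist_eq_zero_iff.mp h)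
  have hzr' := hG.dist_add_dist_of_mem_support hr hzr
  have hwzx : G.dist w x ≤ G.dist w z + G.dist z x := hconn.dist_triangle
  rcases (Walk.mem_support_append_iff p q).mp hz with hzp | hzq
  · -- `z ∈ [u, x]` gives `d(z, x) + d(x, y) ≤ d(z, y) ≤ d(z, x) - d(x, y)`, impossible as `x ≠ y`
    have hzp' := hG.dist_add_dist_of_mem_support hp hzp
    have huzy : G.dist u y ≤ G.dist u z + G.dist z y := hconn.dist_triangle
    simp only [dist_comm (G := G)] at *
    omega
  · have hzq' := hG.dist_add_dist_of_mem_support hq hzq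
    refine (hconn.dist_eq_zero_iff.mp ?_)
    simp only [dist_comm (G := G)] at *
    omega

end IsTree

end SimpleGraph

open SimpleGraph

section TreeAut

variable {V : Type*} {T : SimpleGraph V}

def IsTreeAut.toIso {g : Equiv.Perm V} (hg : IsTreeAut T g) : T ≃g T := ⟨g, hg _ _⟩

lemma IsTreeAut.inv {g : Equiv.Perm V} (hg : IsTreeAut T g) : IsTreeAut T g⁻¹ :=
  fun _ _ => hg.toIso.symm.map_rel_iff'

lemma IsTreeAut.dist_apply {g : Equiv.Perm V} (hg : IsTreeAut T g) (hT : T.Connected) (u v : V) :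
    T.dist (g u) (g v) = T.dist u v :=
  hg.toIso.dist_eq (hT u v)

end TreeAut

section Gate

variable {V : Type*} {T : SimpleGraph V} {C : Set V} {u v w x y : V}

def IsGate (T : SimpleGraph V) (C : Set V) (v x : V) : Prop :=
  x ∈ C ∧ ∀ c ∈ C, T.dist v c = T.dist v x + T.dist x c

lemma IsGate.mem_projSet (hx : IsGate T C v x) : v ∈ projSet T C x := fun c hc => by
  rw [hx.2 c hc]
  exact Nat.le_add_right _ _

lemma IsGate.eq_of_mem_projSet (hT : T.Connected) (hy : IsGate T C v y) (hx : x ∈ C)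
    (hv : v ∈ projSet T C x) : x = y := by
  have h₁ := hv y hy.1
  have h₂ := hy.2 x hx
  exact (hT.dist_eq_zero_iff.mp (by omega : T.dist y x = 0)).symm

lemma IsGate.unique (hT : T.Connected) (hx : IsGate T C v x) (hy : IsGate T C v y) : x = y :=
  hy.eq_of_mem_projSet hT hx.1 hx.mem_projSet

lemma exists_isGate (hT : T.IsTree) (hne : C.Nonempty) (hconv : IsConvex T C) (v : V) :
    ∃ x, IsGate T C v x := by
  set x := Function.argminOn (T.dist v) C hne
  have hxC : x ∈ C := Function.argminOn_mem _ _ _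
  refine ⟨x, hxC, fun c hc => ?_⟩
  obtain ⟨p, hp, -⟩ := hT.connected.exists_path_of_dist v x
  obtain ⟨q, hq, -⟩ := hT.connected.exists_path_of_dist x c
  refine (hT.dist_add_dist_of_isPath_append (hp.append hq fun z hzp hzq => ?_)).symm
  have hzx := hT.dist_add_dist_of_mem_support hp hzp
  have hxz : T.dist v x ≤ T.dist v z :=
    Function.argminOn_le _ _ (hconv x hxC c hc q hq z hzq)
  exact hT.connected.dist_eq_zero_iff.mp (by omega)

lemma IsGate.dist_eq_add_add (hT : T.IsTree) (hx : IsGate T C u x) (hy : IsGate T C w y)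
    (hxy : x ≠ y) : T.dist u w = T.dist u x + T.dist x y + T.dist y w :=
  hT.dist_eq_add_add_of_ne hxy (hx.2 y hy.1) (hy.2 x hx.1)

lemma IsGate.apply (hT : T.Connected) {e : Equiv.Perm V} (he : IsTreeAut T e)
    (hfix : ∀ c ∈ C, e c = c) (hx : IsGate T C v x) : IsGate T C (e v) x := by
  refine ⟨hx.1, fun c hc => ?_⟩
  have h := hx.2 c hc
  rwa [← he.dist_apply hT v c, ← he.dist_apply hT v x, ← he.dist_apply hT x c, hfix c hc,
    hfix x hx.1] at h

lemma self_subset_nbhd (T : SimpleGraph V) (C : Set V) (m : ℕ) : C ⊆ nbhd T C m :=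
  fun c hc => ⟨c, hc, by simp⟩

end Gate

section Gluing

variable {V ι : Type*}

def gluePerm (p : V → ι) (f : ι → Equiv.Perm V) (hf : ∀ v w, p (f (p w) v) = p v) :
    Equiv.Perm V where
  toFun v := f (p v) v
  invFun v := (f (p v)).symm v
  left_inv v := by simp only [hf, Equiv.symm_apply_apply]
  right_inv v := by
    have h := hf ((f (p v)).symm v) v
    rw [Equiv.apply_symm_apply] at h
    show f (p ((f (p v)).symm v)) ((f (p v)).symm v) = v
    rw [← h, Equiv.apply_symm_apply]

variable {p : V → ι} {f : ι → Equiv.Perm V} {hf : ∀ v w, p (f (p w) v) = p v}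

@[simp]
lemma gluePerm_apply (v : V) : gluePerm p f hf v = f (p v) v := rfl

end Gluing

section GluingAlongGates

variable {V : Type*} {T : SimpleGraph V} {C : Set V} {p : V → V} {m : ℕ}

lemma gate_apply_eq (hT : T.Connected) (hp : ∀ v, IsGate T C v (p v)) {e : Equiv.Perm V}
    (he : IsTreeAut T e) (hfix : ∀ c ∈ C, e c = c) (v : V) : p (e v) = p v :=
  ((hp v).apply hT he hfix).unique hT (hp (e v)) |>.symm

lemma apply_gate_eq_of_dist_le (hT : T.IsTree) (hp : ∀ v, IsGate T C v (p v))
    {f : V → Equiv.Perm V} (hfix : ∀ x ∈ C, ∀ v ∈ nbhd T C m, f x v = v) {u v : V}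
    (huv : T.dist u v ≤ m + 1) : f (p v) v = f (p u) v := by
  by_cases h : p v = p u
  · rw [h]
  have hd := (hp u).dist_eq_add_add hT (hp v) (Ne.symm h)
  have hpos : T.dist (p u) (p v) ≠ 0 := fun h0 => h (hT.connected.dist_eq_zero_iff.mp h0).symm
  have hv : v ∈ nbhd T C m := ⟨p v, (hp v).1, by rw [dist_comm]; omega⟩
  rw [hfix _ (hp v).1 v hv, hfix _ (hp u).1 v hv]

lemma adj_apply_gate (hT : T.IsTree) (hp : ∀ v, IsGate T C v (p v)) {f : V → Equiv.Perm V}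
    (haut : ∀ x ∈ C, IsTreeAut T (f x)) (hfix : ∀ x ∈ C, ∀ v ∈ nbhd T C m, f x v = v)
    {u v : V} (huv : T.Adj u v) : T.Adj (f (p u) u) (f (p v) v) := by
  have huv' : T.dist u v ≤ m + 1 := by rw [dist_eq_one_iff_adj.mpr huv]; omega
  rw [apply_gate_eq_of_dist_le hT hp hfix huv']
  exact (haut _ (hp u).1 u v).2 huv

lemma isTreeAut_gluePerm (hT : T.IsTree) (hp : ∀ v, IsGate T C v (p v))
    {f : V → Equiv.Perm V} (haut : ∀ x ∈ C, IsTreeAut T (f x))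
    (hfix : ∀ x ∈ C, ∀ v ∈ nbhd T C m, f x v = v) (hf : ∀ v w, p (f (p w) v) = p v) :
    IsTreeAut T (gluePerm p f hf) := by
  intro u v
  refine ⟨fun huv => ?_, adj_apply_gate hT hp haut hfix⟩
  have hinv : T.Adj ((gluePerm p f hf)⁻¹ (gluePerm p f hf u))
      ((gluePerm p f hf)⁻¹ (gluePerm p f hf v)) :=
    adj_apply_gate hT hp (f := fun x => (f x)⁻¹) (fun x hx => (haut x hx).inv)
      (fun x hx v hv => Equiv.Perm.inv_eq_iff_eq.mpr (hfix x hx v hv).symm) huv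
  simpa only [Equiv.Perm.coe_inv, Equiv.symm_apply_apply] using hinv

end GluingAlongGates

theorem kClosure_satisfies_PropertyPk_general {V : Type*}
    (T : SimpleGraph V) (hT : T.IsTree)
    (G : Subgroup (Equiv.Perm V)) (k : ℕ) :
    PropertyPk T (kClosure T (G : Set (Equiv.Perm V)) k) k := by
  rintro C ⟨hne, hconv, -⟩
  choose p hp using exists_isGate hT hne hconv
  refine ⟨fun g _ _ hg => Equiv.ext fun v => hg _ (hp v).1 v (hp v).mem_projSet, fun h hh => ?_⟩
  have hfix : ∀ x ∈ C, ∀ v ∈ nbhd T C (k - 1), h x v = v := fun x hx => (hh x hx).2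
  have hf : ∀ v w, p (h (p w) v) = p v := fun v w =>
    gate_apply_eq hT.connected hp (hh _ (hp w).1).1.1
      (fun c hc => hfix _ (hp w).1 c (self_subset_nbhd T C _ hc)) v
  refine ⟨gluePerm p h hf, ⟨isTreeAut_gluePerm hT hp (fun x hx => (hh x hx).1.1) hfix hf,
    fun u => ?_⟩, fun v hv => hfix _ (hp v).1 v hv, fun x hx v hv => ?_⟩
  · obtain ⟨g, hgG, hg⟩ := (hh (p u) (hp u).1).1.2 u
    refine ⟨g, hgG, fun v hv => ?_⟩
    rw [gluePerm_apply, apply_gate_eq_of_dist_le hT hp hfix (u := u) (by omega), hg v hv]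
  · rw [gluePerm_apply, (hp v).eq_of_mem_projSet hT.connected hx hv]

theorem kClosure_satisfies_PropertyPk {V : Type*} [Countable V]
    (T : SimpleGraph V) (hT : T.IsTree)
    (G : Subgroup (Equiv.Perm V)) (hG : ∀ g ∈ G, IsTreeAut T g) (k : ℕ) (hk : 1 ≤ k) :
    PropertyPk T (kClosure T (G : Set (Equiv.Perm V)) k) k :=
  kClosure_satisfies_PropertyPk_general T hT G k
end
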